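/- Let N ≥ 4 be an integer, α ∈ (0,1), and suppose the real sequences x_0,…,x_{N−3} and y_0,…,y_{N−2} solve the absorption system. Then x_0 = ( N²(α+1)² + N(3α² − 6α − 1) − 10α² + 4α + 6 ) / ( 4(1+α)(1−α) ). -/
import Mathlib


/-- The sequences `x_0,…,x_{N−3}` and `y_0,…,y_{N−2}` solve the absorption
(expected-hitting-time) system with `ρ = (1−α)/2`:
(i) `y_0 − α·y_{N−2} = 1`;
(ii) `x_k − (1−ρ)·y_k − ρ·x_{N−k−3} = 1 + kρ` for `0 ≤ k ≤ N−3`;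
(iii) `y_k − ρ·y_{k−1} − (1−ρ)·x_{N−k−2} = k − (k−1)ρ` for `1 ≤ k ≤ N−2`. -/
def solvesAbsorption (N : ℕ) (α : ℝ) (x y : ℕ → ℝ) : Prop :=
  y 0 - α * y (N - 2) = 1 ∧
  (∀ k : ℕ, k ≤ N - 3 →
    x k - (1 - (1 - α) / 2) * y k - (1 - α) / 2 * x (N - k - 3) =
      1 + (k : ℝ) * ((1 - α) / 2)) ∧
  (∀ k : ℕ, 1 ≤ k → k ≤ N - 2 →
    y k - (1 - α) / 2 * y (k - 1) - (1 - (1 - α) / 2) * x (N - k - 2) =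
      (k : ℝ) - ((k : ℝ) - 1) * ((1 - α) / 2))

/-- The value of `x_0` in the absorption system. -/
theorem stmt18 (N : ℕ) (hN : 4 ≤ N) (α : ℝ) (hα : α ∈ Set.Ioo (0 : ℝ) 1)
    (x y : ℕ → ℝ) (h : solvesAbsorption N α x y) :
    x 0 = ((N : ℝ) ^ 2 * (α + 1) ^ 2 + (N : ℝ) * (3 * α ^ 2 - 6 * α - 1) -
        10 * α ^ 2 + 4 * α + 6) / (4 * (1 + α) * (1 - α)) := by
  obtain ⟨hy0, hx, hy⟩ := h
  obtain ⟨n, rfl⟩ : ∃ n, N = n + 4 := ⟨N - 4, by omega⟩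
  have hα0 : (0 : ℝ) < α := hα.1
  have hα1 : α < 1 := hα.2
  -- combined pointwise identity
  have key1 : ∑ k ∈ Finset.range (n+2), ((y (k+1) - y k) + (x k - x (n+1-k)))
      = ∑ k ∈ Finset.range (n+2), ((k : ℝ) + 2) := by
    refine Finset.sum_congr rfl fun k hk => ?_
    have hk' : k < n + 2 := Finset.mem_range.mp hk
    have h1 := hy (k+1) (by omega) (by omega)
    have h2 := hx k (by omega)
    rw [show n + 4 - (k+1) - 2 = n+1-k from by omega,
        show (k+1) - 1 = k from by omega] at h1
    rw [show n + 4 - k - 3 = n+1-k from by omega] at h2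
    push_cast at h1
    linear_combination h1 + h2
  have tele : ∑ k ∈ Finset.range (n+2), (y (k+1) - y k) = y (n+2) - y 0 :=
    Finset.sum_range_sub y (n+2)
  have hC : ∑ k ∈ Finset.range (n+2), x (n+1-k) = ∑ k ∈ Finset.range (n+2), x k := by
    have h := Finset.sum_range_reflect x (n+2)
    simp only [show ∀ j : ℕ, n+2-1-j = n+1-j from fun j => by omega] at h
    exact h
  have gauss : ∀ m : ℕ, ∑ k ∈ Finset.range m, ((k : ℝ) + 2) = m * ((m : ℝ) + 3) / 2 := by
    intro m
    induction m with
    | zero => simp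
    | succ p ih =>
      rw [Finset.sum_range_succ, ih]
      push_cast
      ring
  have key : y (n+2) - y 0 = ((n : ℝ) + 2) * ((n : ℝ) + 5) / 2 := by
    have hs : ∑ k ∈ Finset.range (n+2), ((y (k+1) - y k) + (x k - x (n+1-k)))
        = (y (n+2) - y 0) +
          (∑ k ∈ Finset.range (n+2), x k - ∑ k ∈ Finset.range (n+2), x (n+1-k)) := by
      rw [Finset.sum_add_distrib, tele, Finset.sum_sub_distrib]
    rw [hs, hC, gauss (n+2)] at key1
    push_cast at key1
    linarith
  have E1 := hx 0 (by omega)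
  have E2 := hx (n+1) (by omega)
  have E3 := hy (n+2) (by omega) (by omega)
  rw [show n+4-0-3 = n+1 from by omega] at E1
  rw [show n+4-(n+1)-3 = 0 from by omega] at E2
  rw [show n+4-(n+2)-2 = 0 from by omega, show n+2-1 = n+1 from by omega] at E3
  rw [show n+4-2 = n+2 from by omega] at hy0
  push_cast at E1 E2 E3 ⊢
  rw [eq_div_iff (by nlinarith : (4 : ℝ) * (1 + α) * (1 - α) ≠ 0)]
  linear_combination (4*(1-α)) * E1 + (2*(1-α)^2) * E2 - (2*(1-α)*(1+α)) * E3
    + (2*(1+α)^2) * key + (4*(1+α)) * hy0
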